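/- Let n and r be coprime positive integers and let i ≥ 1. Define lift_r on ℚ[[t]] by lift_r(∑ a_m t^m) = ∑_k a_{rk} t^k, and D(∑ a_m t^m) = ∑ m·a_m t^m. Let g = D^i applied to the series −1 − 2∑_{k≥1} t^{nk}. Then lift_r(g) = r^i · g. -/

import Mathlib

open PowerSeries

/-- The Euler derivation `D(∑ aₘ tᵐ) = ∑ m·aₘ tᵐ` on formal power series. -/
noncomputable def eulerD (F : ℚ⟦X⟧) : ℚ⟦X⟧ :=
  PowerSeries.mk fun m => (m : ℚ) * coeff m F

/-- `lift_r (∑ aₘ tᵐ) = ∑ₖ a_{rk} tᵏ`. -/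
noncomputable def liftOp (r : ℕ) (F : ℚ⟦X⟧) : ℚ⟦X⟧ :=
  PowerSeries.mk fun k => coeff (r * k) F

@[simp]
lemma coeff_liftOp (r k : ℕ) (F : ℚ⟦X⟧) : coeff k (liftOp r F) = coeff (r * k) F :=
  coeff_mk _ _

lemma coeff_eulerD_iterate (i m : ℕ) (F : ℚ⟦X⟧) :
    coeff m (eulerD^[i] F) = (m : ℚ) ^ i * coeff m F := by
  induction i with
  | zero => simp
  | succ i ih =>
    rw [Function.iterate_succ_apply', eulerD, coeff_mk, ih, pow_succ]
    ring

lemma liftOp_eulerD_iterate (r i : ℕ) (F : ℚ⟦X⟧) :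
    liftOp r (eulerD^[i] F) = ((r : ℚ) ^ i) • eulerD^[i] (liftOp r F) := by
  ext k
  simp only [coeff_liftOp, coeff_eulerD_iterate, map_smul, smul_eq_mul, Nat.cast_mul, mul_pow]
  ring

lemma liftOp_mk_ite_dvd {n r : ℕ} (hr : r ≠ 0) (hco : Nat.Coprime n r) (a b c : ℚ) :
    liftOp r (PowerSeries.mk fun m => if m = 0 then a else if n ∣ m then b else c)
      = PowerSeries.mk fun m => if m = 0 then a else if n ∣ m then b else c := by
  ext k
  have hdvd : n ∣ r * k ↔ n ∣ k := hco.dvd_mul_left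
  simp only [coeff_liftOp, coeff_mk, mul_eq_zero, hr, false_or, hdvd]

theorem stmt_7_general (n r i : ℕ) (hr : 1 ≤ r) (hco : Nat.Coprime n r) :
    liftOp r (eulerD^[i]
        (PowerSeries.mk fun m => if m = 0 then (-1 : ℚ) else if n ∣ m then -2 else 0))
      = ((r : ℚ) ^ i) • eulerD^[i]
        (PowerSeries.mk fun m => if m = 0 then (-1 : ℚ) else if n ∣ m then -2 else 0) := by
  rw [liftOp_eulerD_iterate, liftOp_mk_ite_dvd (by omega) hco]

theorem stmt_7 (n r i : ℕ) (hn : 1 ≤ n) (hr : 1 ≤ r) (hi : 1 ≤ i) (hco : Nat.Coprime n r) :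
    liftOp r (eulerD^[i]
        (PowerSeries.mk fun m => if m = 0 then (-1 : ℚ) else if n ∣ m then -2 else 0))
      = ((r : ℚ) ^ i) • eulerD^[i]
        (PowerSeries.mk fun m => if m = 0 then (-1 : ℚ) else if n ∣ m then -2 else 0) :=
  stmt_7_general n r i hr hco
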